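/- Let A be an algebraic curvature tensor on a nondegenerate inner product space V and let rho be its Ricci operator. If rho^2 = -s^2 · id with s ≠ 0 and A(rho x, y, z, rho w) = -s^2 A(x,y,z,w) for all x,y,z,w in V, then A(rho x, y, z, w) = A(x, y, z, rho w) for all x,y,z,w in V, and hence rho commutes with all Jacobi operators of A. -/

import Mathlib

/-!
Substituting `rho x` for `x` in `A(rho x, y, z, rho w) = c A(x, y, z, w)` and using `rho² = c`
gives `c A(x, y, z, rho w) = c A(rho x, y, z, w)`; cancelling `c ≠ 0` yields the symmetry of
`rho` across the first and last slots. Since `rho` is self-adjoint and the form is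
nondegenerate, this says exactly that `rho (R(x, y) z) = R(rho x, y) z`, so `rho` commutes
with every Jacobi operator `y ↦ R(y, x) x`.
-/

section

variable {K V : Type*} [Field K] [AddCommGroup V] [Module K V]

theorem apply_first_eq_apply_last_of_sq_eq_smul
    (A : V →ₗ[K] V →ₗ[K] V →ₗ[K] V →ₗ[K] K) (rho : V →ₗ[K] V) {c : K} (hc : c ≠ 0)
    (hsq : ∀ x, rho (rho x) = c • x)
    (h : ∀ x y z w, A (rho x) y z (rho w) = c * A x y z w)
    (x y z w : V) : A (rho x) y z w = A x y z (rho w) := by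
  have hscaled : c * A x y z (rho w) = c * A (rho x) y z w := by
    simpa [hsq] using h (rho x) y z w
  exact (mul_left_cancel₀ hc hscaled).symm

theorem map_curvatureOp_eq_of_apply_first_eq_apply_last
    (B : LinearMap.BilinForm K V) (hB : B.SeparatingLeft)
    (A : V →ₗ[K] V →ₗ[K] V →ₗ[K] V →ₗ[K] K) (R : V →ₗ[K] V →ₗ[K] V →ₗ[K] V)
    (hR : ∀ x y z w, B (R x y z) w = A x y z w)
    (rho : V →ₗ[K] V) (hrho : ∀ x y, B (rho x) y = B x (rho y))
    (hA : ∀ x y z w, A (rho x) y z w = A x y z (rho w))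
    (x y z : V) : rho (R x y z) = R (rho x) y z := by
  refine sub_eq_zero.mp (hB _ fun w => ?_)
  rw [map_sub, LinearMap.sub_apply, hrho, hR, hR, hA, sub_self]

end

theorem stmt_8 {V : Type*} [AddCommGroup V] [Module ℝ V]
    (B : LinearMap.BilinForm ℝ V)
    (hBnd : B.Nondegenerate)
    (A : V →ₗ[ℝ] V →ₗ[ℝ] V →ₗ[ℝ] V →ₗ[ℝ] ℝ)
    (Rop : V →ₗ[ℝ] V →ₗ[ℝ] V →ₗ[ℝ] V)
    (hRop : ∀ x y z w, B (Rop x y z) w = A x y z w)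
    (Jop : V → V →ₗ[ℝ] V)
    (hJop : ∀ x y, Jop x y = Rop y x x)
    (rho : V →ₗ[ℝ] V) (hrho_sa : ∀ x y, B (rho x) y = B x (rho y))
    (s : ℝ) (hs : s ≠ 0)
    (hsq : ∀ x, rho (rho x) = -(s ^ 2) • x)
    (h : ∀ x y z w, A (rho x) y z (rho w) = -(s ^ 2) * A x y z w) :
    (∀ x y z w, A (rho x) y z w = A x y z (rho w)) ∧
    (∀ x, rho ∘ₗ Jop x = Jop x ∘ₗ rho) := by
  have hA := apply_first_eq_apply_last_of_sq_eq_smul A rho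
    (neg_ne_zero.mpr (pow_ne_zero 2 hs)) hsq h
  refine ⟨hA, fun x => LinearMap.ext fun y => ?_⟩
  simpa only [LinearMap.comp_apply, hJop] using
    map_curvatureOp_eq_of_apply_first_eq_apply_last B hBnd.1 A Rop hRop rho hrho_sa hA y x x
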